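/- Let Λ ⊂ ℝ² be a lattice, i.e. the ℤ-span of two linearly independent vectors v₁, v₂, and let Y be a measurable fundamental domain of Λ with finite Lebesgue measure. Let R : ℝ² → ℝ² be the rotation by angle 2π/3 and assume R maps Λ onto Λ. Let g : ℝ² → ℂ² be locally integrable, Λ-periodic (g(y + v) = g(y) for all v ∈ Λ and almost every y), and satisfy g(R y) = R g(y) for almost every y ∈ ℝ², where R acts on ℂ² as the complexification of the real rotation matrix. Then ∫_Y g(y) dy = 0. -/

import Mathlib

/-!
Write `I = ∫_Y g`. Since `R` preserves Lebesgue measure and maps `Λ` onto itself, `R(Y)` is again a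
fundamental domain of `Λ`, so periodicity and equivariance give `I = ∫_{R(Y)} g = ∫_Y g ∘ R = R I`.
A rotation by `2π/3` fixes no nonzero vector of `ℂ²`, hence `I = 0`.
-/

noncomputable section

open MeasureTheory

/-- The rotation of the plane by angle `2π/3`, as a `2×2` real matrix. -/
def Rot : Matrix (Fin 2) (Fin 2) ℝ :=
  !![Real.cos (2 * Real.pi / 3), -Real.sin (2 * Real.pi / 3);
     Real.sin (2 * Real.pi / 3), Real.cos (2 * Real.pi / 3)]

namespace AddSubgroup

lemma countable_closure_pair {A : Type*} [AddCommGroup A] (x y : A) :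
    Countable (closure ({x, y} : Set A)) := by
  have h : (closure ({x, y} : Set A) : Set A) = Set.range fun p : ℤ × ℤ => p.1 • x + p.2 • y := by
    ext z
    simp [mem_closure_pair]
  exact Set.countable_coe_iff.mpr (h ▸ Set.countable_range _)

variable {E V : Type*} [AddCommGroup E] [MeasurableSpace E] {μ : Measure E} {Λ : AddSubgroup E}

/-- The witness is `f` restricted to the `Λ`-invariant full-measure set on which all the
(countably many) periodicity identities hold. -/
lemma exists_periodic_ae_eq [Countable Λ] [Zero V] {f : E → V}
    (hf : ∀ v ∈ Λ, ∀ᵐ y ∂μ, f (y + v) = f y) :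
    ∃ f' : E → V, (∀ (v : Λ) (y : E), f' (v +ᵥ y) = f' y) ∧ f' =ᵐ[μ] f := by
  set A : Set E := {y | ∀ v : Λ, f (y + v) = f y}
  have vadd_mem : ∀ (v : Λ) (y : E), y ∈ A → v +ᵥ y ∈ A := by
    intro v y hy w
    have hvy : (v +ᵥ y : E) = y + v := add_comm _ _
    rw [hvy, add_assoc, ← coe_add, hy, hy]
  have vadd_mem_iff : ∀ (v : Λ) (y : E), v +ᵥ y ∈ A ↔ y ∈ A := fun v y =>
    ⟨fun h => by simpa using vadd_mem (-v) _ h, vadd_mem v y⟩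
  refine ⟨A.indicator f, fun v y => ?_, ?_⟩
  · by_cases hy : y ∈ A
    · rw [Set.indicator_of_mem ((vadd_mem_iff v y).2 hy), Set.indicator_of_mem hy]
      simpa [vadd_def, add_comm] using hy v
    · rw [Set.indicator_of_notMem (mt (vadd_mem_iff v y).1 hy), Set.indicator_of_notMem hy]
  · have hA : ∀ᵐ y ∂μ, y ∈ A := ae_all_iff.mpr fun v => hf v v.2
    filter_upwards [hA] with y hy using Set.indicator_of_mem hy f

end AddSubgroup

namespace MeasureTheory.IsAddFundamentalDomain

variable {E : Type*} [AddCommGroup E] [TopologicalSpace E] [MeasurableSpace E] [BorelSpace E]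
  {μ : Measure E} {Λ : AddSubgroup E} {Y : Set E}

lemma image_continuousAddEquiv (hY : IsAddFundamentalDomain Λ Y μ) (L : E ≃ₜ+ E)
    (hL : MeasurePreserving L μ μ) (hLΛ : (L : E → E) '' Λ = Λ) :
    IsAddFundamentalDomain Λ (L '' Y) μ := by
  have hmap : Λ.map (L : E →+ E) = Λ := SetLike.coe_injective (by simpa using hLΛ)
  let σ : Λ ≃+ Λ := (L.toAddEquiv.addSubgroupMap Λ).trans (AddEquiv.addSubgroupCongr hmap)
  have hσ : ∀ w : Λ, (σ w : E) = L w := fun _ => rfl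
  have hLsymm : MeasurePreserving L.toHomeomorph.toMeasurableEquiv.symm μ μ :=
    MeasurePreserving.symm _ hL
  refine hY.image_of_equiv L.toEquiv hLsymm.quasiMeasurePreserving σ.symm.toEquiv fun v x => ?_
  change L ((σ.symm v : E) + x) = v + L x
  rw [map_add, ← hσ, σ.apply_symm_apply]

variable [MeasurableAdd E] [μ.IsAddLeftInvariant] [Countable Λ]
  {𝕜 V : Type*} [RCLike 𝕜] [NormedAddCommGroup V] [NormedSpace 𝕜 V] [NormedSpace ℝ V]

lemma apply_setIntegral_eq_of_equivariant (hY : IsAddFundamentalDomain Λ Y μ) (L : E ≃ₜ+ E)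
    (hL : MeasurePreserving L μ μ) (hLΛ : (L : E → E) '' Λ = Λ) (T : V ≃L[𝕜] V) {g : E → V}
    (hper : ∀ v ∈ Λ, ∀ᵐ y ∂μ, g (y + v) = g y) (hequiv : ∀ᵐ y ∂μ, g (L y) = T (g y)) :
    T (∫ y in Y, g y ∂μ) = ∫ y in Y, g y ∂μ := by
  obtain ⟨g', hg'per, hg'⟩ := Λ.exists_periodic_ae_eq hper
  have hequiv' : ∀ᵐ y ∂μ, T (g' y) = g' (L y) := by
    filter_upwards [hL.quasiMeasurePreserving.ae_eq_comp hg', hequiv, hg'] with y h1 h2 h3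
    rw [h3, ← h2]
    exact h1.symm
  calc T (∫ y in Y, g y ∂μ) = T (∫ y in Y, g' y ∂μ) := by
        rw [integral_congr_ae (ae_restrict_of_ae hg')]
    _ = ∫ y in Y, T (g' y) ∂μ := (T.integral_comp_comm _).symm
    _ = ∫ y in Y, g' (L y) ∂μ := integral_congr_ae (ae_restrict_of_ae hequiv')
    _ = ∫ y in L '' Y, g' y ∂μ :=
        (hL.setIntegral_image_emb L.toHomeomorph.measurableEmbedding g' Y).symm
    _ = ∫ y in Y, g' y ∂μ := (hY.image_continuousAddEquiv L hL hLΛ).setIntegral_eq hY hg'per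
    _ = ∫ y in Y, g y ∂μ := integral_congr_ae (ae_restrict_of_ae hg')

end MeasureTheory.IsAddFundamentalDomain

lemma Real.cos_two_pi_div_three : Real.cos (2 * Real.pi / 3) = -(1 / 2) := by
  rw [show 2 * Real.pi / 3 = Real.pi - Real.pi / 3 by ring, Real.cos_pi_sub, Real.cos_pi_div_three]

lemma Matrix.measurePreserving_mulVec {ι : Type*} [Fintype ι] [DecidableEq ι]
    {M : Matrix ι ι ℝ} (hM : |M.det| = 1) : MeasurePreserving M.mulVec volume volume := by
  refine ⟨(Matrix.toLin' M).continuous_of_finiteDimensional.measurable, ?_⟩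
  change Measure.map (Matrix.toLin' M) volume = volume
  rw [Real.map_matrix_volume_pi_eq_smul_volume_pi (by simp [← abs_ne_zero, hM])]
  simp [abs_inv, hM]

lemma det_Rot : Rot.det = 1 := by
  rw [Rot, Matrix.det_fin_two_of]
  nlinarith [Real.sin_sq_add_cos_sq (2 * Real.pi / 3)]

def rotSL : Matrix.SpecialLinearGroup (Fin 2) ℝ := ⟨Rot, det_Rot⟩

def rotAddEquiv : (Fin 2 → ℝ) ≃ₜ+ (Fin 2 → ℝ) :=
  (Matrix.SpecialLinearGroup.toLin' rotSL).toContinuousLinearEquiv.toContinuousAddEquiv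

lemma coe_rotAddEquiv : ⇑rotAddEquiv = Rot.mulVec :=
  funext fun y => Matrix.toLin'_apply Rot y

def rotComplex : (Fin 2 → ℂ) ≃L[ℂ] (Fin 2 → ℂ) :=
  (Matrix.SpecialLinearGroup.toLin'
    (Matrix.SpecialLinearGroup.map Complex.ofRealHom rotSL)).toContinuousLinearEquiv

lemma coe_rotComplex : ⇑rotComplex = (Rot.map Complex.ofReal).mulVec :=
  funext fun x => Matrix.toLin'_apply _ x

lemma eq_zero_of_mulVec_Rot_eq_self {x : Fin 2 → ℂ} (hx : (Rot.map Complex.ofReal).mulVec x = x) :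
    x = 0 := by
  set s : ℝ := Real.sin (2 * Real.pi / 3)
  have hs : (s : ℂ) ^ 2 = 3 / 4 := by
    have h := Real.sin_sq_add_cos_sq (2 * Real.pi / 3)
    rw [Real.cos_two_pi_div_three] at h
    rw [← Complex.ofReal_pow, (by linarith : s ^ 2 = 3 / 4)]
    norm_num
  have e0 := congrFun hx 0
  have e1 := congrFun hx 1
  simp only [Rot, Matrix.mulVec_eq_sum, Real.cos_two_pi_div_three, one_div, op_smul_eq_smul,
    Finset.sum_apply, Pi.smul_apply, Matrix.transpose_apply, Matrix.map_apply, Matrix.of_apply,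
    Matrix.cons_val', Matrix.cons_val_fin_one, Matrix.cons_val_zero, Matrix.cons_val_one,
    smul_eq_mul, Fin.sum_univ_two, Complex.ofReal_neg, Complex.ofReal_inv, Complex.ofReal_ofNat,
    mul_neg] at e0 e1
  -- `Rot - 1` has determinant `2 - 2 cos (2π/3) = 3`; these combinations apply its inverse.
  have h0 : x 0 = 0 := by linear_combination (-(1 : ℂ) / 2) * e0 + (s : ℂ) / 3 * e1 - x 0 / 3 * hs
  have h1 : x 1 = 0 := by linear_combination (-(1 : ℂ) / 2) * e1 - (s : ℂ) / 3 * e0 - x 1 / 3 * hs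
  funext i
  fin_cases i
  exacts [h0, h1]

theorem statement2_general (v₁ v₂ : Fin 2 → ℝ)
    (Λ : AddSubgroup (Fin 2 → ℝ)) (hΛ : Λ = AddSubgroup.closure {v₁, v₂})
    (Y : Set (Fin 2 → ℝ))
    (hfund : IsAddFundamentalDomain Λ Y volume)
    (hRΛ : Rot.mulVec '' (Λ : Set (Fin 2 → ℝ)) = (Λ : Set (Fin 2 → ℝ)))
    (g : (Fin 2 → ℝ) → (Fin 2 → ℂ))
    (hper : ∀ v ∈ Λ, ∀ᵐ y : Fin 2 → ℝ, g (y + v) = g y)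
    (hequiv : ∀ᵐ y : Fin 2 → ℝ,
      g (Rot.mulVec y) = (Rot.map Complex.ofReal).mulVec (g y)) :
    ∫ y in Y, g y = 0 := by
  have : Countable Λ := hΛ ▸ AddSubgroup.countable_closure_pair v₁ v₂
  have hR : MeasurePreserving rotAddEquiv volume volume := by
    rw [coe_rotAddEquiv]
    exact Matrix.measurePreserving_mulVec (by simp [det_Rot])
  apply eq_zero_of_mulVec_Rot_eq_self
  rw [← coe_rotComplex] at hequiv ⊢
  rw [← coe_rotAddEquiv] at hequiv hRΛ
  exact hfund.apply_setIntegral_eq_of_equivariant rotAddEquiv hR hRΛ rotComplex hper hequiv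

/-- Let `Λ ⊂ ℝ²` be the lattice spanned by two linearly independent vectors,
`Y` a measurable fundamental domain of `Λ` of finite measure, and `R` the rotation by `2π/3`,
assumed to map `Λ` onto `Λ`. If `g : ℝ² → ℂ²` is locally integrable, `Λ`-periodic, and
`R`-equivariant (`g(Ry) = R g(y)` a.e., with `R` acting on `ℂ²` as the complexification of
the real rotation matrix), then `∫_Y g = 0`. -/
theorem statement2 (v₁ v₂ : Fin 2 → ℝ) (hind : LinearIndependent ℝ ![v₁, v₂])
    (Λ : AddSubgroup (Fin 2 → ℝ)) (hΛ : Λ = AddSubgroup.closure {v₁, v₂})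
    (Y : Set (Fin 2 → ℝ)) (hYm : MeasurableSet Y) (hYfin : volume Y < ⊤)
    (hfund : IsAddFundamentalDomain Λ Y volume)
    (hRΛ : Rot.mulVec '' (Λ : Set (Fin 2 → ℝ)) = (Λ : Set (Fin 2 → ℝ)))
    (g : (Fin 2 → ℝ) → (Fin 2 → ℂ))
    (hloc : LocallyIntegrable g volume)
    (hper : ∀ v ∈ Λ, ∀ᵐ y : Fin 2 → ℝ, g (y + v) = g y)
    (hequiv : ∀ᵐ y : Fin 2 → ℝ,
      g (Rot.mulVec y) = (Rot.map Complex.ofReal).mulVec (g y)) :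
    ∫ y in Y, g y = 0 :=
  statement2_general v₁ v₂ Λ hΛ Y hfund hRΛ g hper hequiv
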